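/- Let μ̃ be the bilinear skew-symmetric map on ℝ^7 with nonzero basis brackets [e1,e2]=-(√519593/2378)e3, [e1,e3]=(√377/58)e4, [e1,e4]=(3√605845438/252068)e5+(√126034/6148)e6, [e2,e3]=(√777722/6148)e5-(3√58406/6148)e6, [e2,e5]=(√126034/1189)e7, [e3,e4]=(3√13079/1189)e7. Then μ̃ satisfies the Jacobi identity, D = diag(1,2,3,4,5,5,7) is a derivation of (ℝ^7,μ̃), and m(μ̃) = -(43/58)·Id + (9/58)·D; in particular m(μ̃) = diag(-17/29,-25/58,-8/29,-7/58,1/29,1/29,10/29). -/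

import Mathlib

open Finset

noncomputable section

/-- `ℝ⁷` with its standard basis and standard inner product. -/
abbrev V7 : Type := Fin 7 → ℝ

/-- The standard basis vector `e i`. -/
def e (i : Fin 7) : V7 := Pi.single i 1

/-- The standard inner product on `ℝ⁷`. -/
def dot (x y : V7) : ℝ := ∑ i, x i * y i

/-- Structure constants built from a list of entries `(i, j, k, a)`, each meaning that
`μ (e i) (e j)` has component `a` along `e k` (and `μ (e j) (e i)` has component `-a`);
all unlisted basis brackets are `0`. -/
def toC (L : List (Fin 7 × Fin 7 × Fin 7 × ℝ)) (i j k : Fin 7) : ℝ :=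
  (L.map fun t =>
      (if t.1 = i ∧ t.2.1 = j ∧ t.2.2.1 = k then t.2.2.2 else 0)
    - (if t.1 = j ∧ t.2.1 = i ∧ t.2.2.1 = k then t.2.2.2 else 0)).sum

/-- The bilinear skew-symmetric map on `ℝ⁷` with structure constants `c`. -/
def br (c : Fin 7 → Fin 7 → Fin 7 → ℝ) (x y : V7) : V7 :=
  fun k => ∑ i, ∑ j, x i * y j * c i j k

lemma br_add_left (c : Fin 7 → Fin 7 → Fin 7 → ℝ) (x x' y : V7) :
    br c (x + x') y = br c x y + br c x' y := by
  funext k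
  simp only [br, Pi.add_apply, ← Finset.sum_add_distrib]
  exact Finset.sum_congr rfl fun i _ => Finset.sum_congr rfl fun j _ => by ring

lemma br_smul_left (c : Fin 7 → Fin 7 → Fin 7 → ℝ) (r : ℝ) (x y : V7) :
    br c (r • x) y = r • br c x y := by
  funext k
  simp only [br, Pi.smul_apply, smul_eq_mul, Finset.mul_sum]
  exact Finset.sum_congr rfl fun i _ => Finset.sum_congr rfl fun j _ => by ring

lemma br_add_right (c : Fin 7 → Fin 7 → Fin 7 → ℝ) (x y y' : V7) :
    br c x (y + y') = br c x y + br c x y' := by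
  funext k
  simp only [br, Pi.add_apply, ← Finset.sum_add_distrib]
  exact Finset.sum_congr rfl fun i _ => Finset.sum_congr rfl fun j _ => by ring

lemma br_smul_right (c : Fin 7 → Fin 7 → Fin 7 → ℝ) (r : ℝ) (x y : V7) :
    br c x (r • y) = r • br c x y := by
  funext k
  simp only [br, Pi.smul_apply, smul_eq_mul, Finset.mul_sum]
  exact Finset.sum_congr rfl fun i _ => Finset.sum_congr rfl fun j _ => by ring

lemma br_zero_left (c : Fin 7 → Fin 7 → Fin 7 → ℝ) (y : V7) : br c 0 y = 0 := by
  funext k; simp [br]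

lemma br_zero_right (c : Fin 7 → Fin 7 → Fin 7 → ℝ) (x : V7) : br c x 0 = 0 := by
  funext k; simp [br]

/-- The space of derivations of the algebra `(ℝ⁷, br c)`, i.e. the linear maps `D` with
`D (μ x y) = μ (D x) y + μ x (D y)` for all `x, y`, as a submodule of the endomorphisms. -/
def derivations (c : Fin 7 → Fin 7 → Fin 7 → ℝ) : Submodule ℝ (Module.End ℝ V7) where
  carrier := {D | ∀ x y, D (br c x y) = br c (D x) y + br c x (D y)}
  add_mem' := by
    intro D E hD hE x y
    simp only [LinearMap.add_apply, hD x y, hE x y, br_add_left, br_add_right]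
    abel
  zero_mem' := by
    intro x y
    simp [br_zero_left, br_zero_right]
  smul_mem' := by
    intro r D hD x y
    simp only [LinearMap.smul_apply, hD x y, smul_add, br_smul_left, br_smul_right]

/-- The Jacobi identity for the bracket `br c`. -/
def Jacobi (c : Fin 7 → Fin 7 → Fin 7 → ℝ) : Prop :=
  ∀ x y z : V7, br c (br c x y) z + br c (br c y z) x + br c (br c z x) y = 0

/-- Skew-symmetry of the bracket `br c`. -/
def Skew (c : Fin 7 → Fin 7 → Fin 7 → ℝ) : Prop :=
  ∀ x y : V7, br c x y = - br c y x

/-- The diagonal endomorphism `diag (a 1, …, a 7)` of `ℝ⁷`, `e i ↦ a i • e i`. -/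
def diagL (a : Fin 7 → ℝ) : Module.End ℝ V7 :=
  LinearMap.pi fun i => a i • LinearMap.proj i

/-- Structure constants of the bracket `μ̃`. -/
def c13 : Fin 7 → Fin 7 → Fin 7 → ℝ :=
  toC [(0, 1, 2, -(Real.sqrt 519593 / 2378)),
   (0, 2, 3, Real.sqrt 377 / 58),
   (0, 3, 4, 3 * Real.sqrt 605845438 / 252068),
   (0, 3, 5, Real.sqrt 126034 / 6148),
   (1, 2, 4, Real.sqrt 777722 / 6148),
   (1, 2, 5, -(3 * Real.sqrt 58406 / 6148)),
   (1, 4, 6, Real.sqrt 126034 / 1189),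
   (2, 3, 6, 3 * Real.sqrt 13079 / 1189)]


/-! Every assertion is a finite computation once the bracket is written out in coordinates
(`br_c13`): skew-symmetry, the Jacobi identity and the derivation property become polynomial
identities in the coordinates, and testing the defining identity of the moment map against
`y = e k` gives its `k`-th coordinate. Besides `√a ^ 2 = a`, the only relations among the
radicals that are needed are `√519593 · √13079 · 106 = √605845438 · √126034` and
`√777722 · √58406 · 41 = √605845438 · √126034`, both sides being square roots of the same
integer. -/

lemma dot_e (x : V7) (q : Fin 7) : dot x (e q) = x q := by
  simp [dot, e, Pi.single_apply]

lemma diagL_apply (a : Fin 7 → ℝ) (x : V7) (i : Fin 7) : diagL a x i = a i * x i := rfl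

lemma smul_one_add_smul_diagL (s t : ℝ) (a : Fin 7 → ℝ) :
    s • (1 : Module.End ℝ V7) + t • diagL a = diagL fun i => s + t * a i := by
  refine LinearMap.ext fun x => funext fun i => ?_
  simp only [LinearMap.add_apply, LinearMap.smul_apply, Module.End.one_apply, Pi.add_apply,
    Pi.smul_apply, smul_eq_mul, diagL_apply]
  ring

lemma sqrt_mul_sqrt_mul_eq_sqrt_mul_sqrt {a b c d n : ℝ} (ha : 0 ≤ a) (hb : 0 ≤ b)
    (hc : 0 ≤ c) (hn : 0 ≤ n) (h : a * b * n ^ 2 = c * d) : √a * √b * n = √c * √d := by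
  rw [← Real.sqrt_mul ha, ← Real.sqrt_mul hc, ← h, Real.sqrt_mul (mul_nonneg ha hb),
    Real.sqrt_sq hn]

lemma toC_cons (t : Fin 7 × Fin 7 × Fin 7 × ℝ) (L : List (Fin 7 × Fin 7 × Fin 7 × ℝ))
    (i j k : Fin 7) :
    toC (t :: L) i j k =
      (if t.1 = i ∧ t.2.1 = j ∧ t.2.2.1 = k then t.2.2.2 else 0)
        - (if t.1 = j ∧ t.2.1 = i ∧ t.2.2.1 = k then t.2.2.2 else 0) + toC L i j k := by
  simp [toC]

lemma br_toC_apply (L : List (Fin 7 × Fin 7 × Fin 7 × ℝ)) (x y : V7) (k : Fin 7) :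
    br (toC L) x y k =
      (L.map fun t =>
        if t.2.2.1 = k then (x t.1 * y t.2.1 - x t.2.1 * y t.1) * t.2.2.2 else 0).sum := by
  induction L with
  | nil => simp [br, toC]
  | cons t L ih =>
    rw [List.map_cons, List.sum_cons, ← ih]
    simp only [br, toC_cons, mul_add, mul_sub, Finset.sum_add_distrib, Finset.sum_sub_distrib]
    by_cases hk : t.2.2.1 = k
    · simp [hk, ite_and, mul_ite, Finset.sum_ite_eq]
      ring
    · simp [hk]

def IsMomentMap (c : Fin 7 → Fin 7 → Fin 7 → ℝ) (m : Module.End ℝ V7) : Prop :=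
  ∀ x y : V7, dot (m x) y =
    -2 * ∑ i, ∑ j, dot (br c x (e i)) (e j) * dot (br c y (e i)) (e j)
    + ∑ i, ∑ j, dot (br c (e i) (e j)) x * dot (br c (e i) (e j)) y

lemma IsMomentMap.apply {c : Fin 7 → Fin 7 → Fin 7 → ℝ} {m : Module.End ℝ V7}
    (hm : IsMomentMap c m) (x : V7) (k : Fin 7) :
    m x k = -2 * ∑ i, ∑ j, br c x (e i) j * br c (e k) (e i) j
      + ∑ i, ∑ j, dot (br c (e i) (e j)) x * br c (e i) (e j) k := by
  simpa only [dot_e] using hm x (e k)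

lemma br_c13 (x y : V7) : br c13 x y =
    ![0, 0,
      (x 0 * y 1 - x 1 * y 0) * -(√519593 / 2378),
      (x 0 * y 2 - x 2 * y 0) * (√377 / 58),
      (x 0 * y 3 - x 3 * y 0) * (3 * √605845438 / 252068)
        + (x 1 * y 2 - x 2 * y 1) * (√777722 / 6148),
      (x 0 * y 3 - x 3 * y 0) * (√126034 / 6148)
        + (x 1 * y 2 - x 2 * y 1) * -(3 * √58406 / 6148),
      (x 1 * y 4 - x 4 * y 1) * (√126034 / 1189)
        + (x 2 * y 3 - x 3 * y 2) * (3 * √13079 / 1189)] := by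
  ext k
  fin_cases k <;> simp [c13, br_toC_apply]

theorem skew_c13 : Skew c13 := by
  intro x y
  ext k
  fin_cases k <;>
    simp only [br_c13, Pi.neg_apply, Matrix.cons_val, Matrix.cons_val_zero,
      Matrix.cons_val_one, Fin.reduceFinMk, Fin.zero_eta, Fin.mk_one, Fin.isValue] <;>
    ring1

theorem jacobi_c13 : Jacobi c13 := by
  have h : √519593 * √13079 * 106 = √605845438 * √126034 :=
    sqrt_mul_sqrt_mul_eq_sqrt_mul_sqrt (by norm_num) (by norm_num) (by norm_num) (by norm_num)
      (by norm_num)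
  intro x y z
  ext k
  fin_cases k <;>
    simp only [br_c13, Pi.add_apply, Pi.zero_apply, Matrix.cons_val, Matrix.cons_val_zero,
      Matrix.cons_val_one, Fin.reduceFinMk, Fin.zero_eta, Fin.mk_one, Fin.isValue] <;>
    try ring1
  linear_combination (3 / 299708852 * (x 1 * y 0 * z 3 - x 0 * y 1 * z 3 + x 3 * y 1 * z 0
    - x 3 * y 0 * z 1 + x 0 * y 3 * z 1 - x 1 * y 3 * z 0)) * h

theorem diagL_mem_derivations_c13 : diagL ![1, 2, 3, 4, 5, 5, 7] ∈ derivations c13 := by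
  intro x y
  ext k
  fin_cases k <;>
    simp only [br_c13, diagL_apply, Pi.add_apply, Matrix.cons_val, Matrix.cons_val_zero,
      Matrix.cons_val_one, Fin.reduceFinMk, Fin.zero_eta, Fin.mk_one, Fin.isValue] <;>
    ring1

theorem IsMomentMap.eq_diagL_c13 {m : Module.End ℝ V7} (hm : IsMomentMap c13 m) :
    m = diagL ![-17/29, -25/58, -8/29, -7/58, 1/29, 1/29, 10/29] := by
  have s1 : √519593 ^ 2 = 519593 := Real.sq_sqrt (by norm_num)
  have s2 : √377 ^ 2 = 377 := Real.sq_sqrt (by norm_num)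
  have s3 : √605845438 ^ 2 = 605845438 := Real.sq_sqrt (by norm_num)
  have s4 : √126034 ^ 2 = 126034 := Real.sq_sqrt (by norm_num)
  have s5 : √777722 ^ 2 = 777722 := Real.sq_sqrt (by norm_num)
  have s6 : √58406 ^ 2 = 58406 := Real.sq_sqrt (by norm_num)
  have s7 : √13079 ^ 2 = 13079 := Real.sq_sqrt (by norm_num)
  have h : √777722 * √58406 * 41 = √605845438 * √126034 :=
    sqrt_mul_sqrt_mul_eq_sqrt_mul_sqrt (by norm_num) (by norm_num) (by norm_num) (by norm_num)
      (by norm_num)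
  refine LinearMap.ext fun x => funext fun k => ?_
  rw [hm.apply, diagL_apply]
  fin_cases k <;>
    simp only [Fin.sum_univ_seven, br_c13, dot, e, Pi.single_apply, Matrix.cons_val,
      Matrix.cons_val_zero, Matrix.cons_val_one, Fin.reduceFinMk, Fin.zero_eta, Fin.mk_one,
      Fin.isValue, Fin.reduceEq, ↓reduceIte]
  -- each certificate only substitutes `√a ^ 2 = a`; `h` cancels the `e₅`–`e₆` entry
  · linear_combination (-1/2827442 * x 0) * s1 + (-1/1682 * x 0) * s2
      + (-9/31769138312 * x 0) * s3 + (-1/18898952 * x 0) * s4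
  · linear_combination (-1/2827442 * x 1) * s1 + (-2/1413721 * x 1) * s4
      + (-1/18898952 * x 1) * s5 + (-9/18898952 * x 1) * s6
  · linear_combination (1/2827442 * x 2) * s1 + (-1/1682 * x 2) * s2
      + (-1/18898952 * x 2) * s5 + (-9/18898952 * x 2) * s6 + (-18/1413721 * x 2) * s7
  · linear_combination (1/1682 * x 3) * s2 + (-9/31769138312 * x 3) * s3
      + (-1/18898952 * x 3) * s4 + (-18/1413721 * x 3) * s7
  · linear_combination (9/31769138312 * x 4) * s3 + (-2/1413721 * x 4) * s4
      + (1/18898952 * x 4) * s5 + (-3/774857032 * x 5) * h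
  · linear_combination (1/18898952 * x 5) * s4 + (9/18898952 * x 5) * s6
      + (-3/774857032 * x 4) * h
  · linear_combination (2/1413721 * x 6) * s4 + (18/1413721 * x 6) * s7

/-- The bracket satisfies the Jacobi identity (and is skew-symmetric),
`D` is a derivation of it, and the unnormalized moment map `m(μ̃)` — i.e. the endomorphism
`m` of `ℝ⁷` determined by
`⟨m x, y⟩ = -2 ∑ᵢⱼ ⟨μ̃(x,eᵢ),eⱼ⟩⟨μ̃(y,eᵢ),eⱼ⟩ + ∑ᵢⱼ ⟨μ̃(eᵢ,eⱼ),x⟩⟨μ̃(eᵢ,eⱼ),y⟩` —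
equals `-(43/58) • Id + 9/58 • D`, which is the indicated diagonal map. -/
theorem stmt :
    Skew c13 ∧ Jacobi c13 ∧
    diagL ![1, 2, 3, 4, 5, 5, 7] ∈ derivations c13 ∧
    ∀ m : Module.End ℝ V7,
      (∀ x y : V7, dot (m x) y =
          -2 * ∑ i, ∑ j, dot (br c13 x (e i)) (e j) * dot (br c13 y (e i)) (e j)
          + ∑ i, ∑ j, dot (br c13 (e i) (e j)) x * dot (br c13 (e i) (e j)) y) →
      m = (-(43/58) : ℝ) • (1 : Module.End ℝ V7) + (9/58 : ℝ) • diagL ![1, 2, 3, 4, 5, 5, 7]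
      ∧ m = diagL ![-17/29, -25/58, -8/29, -7/58, 1/29, 1/29, 10/29] := by
  refine ⟨skew_c13, jacobi_c13, diagL_mem_derivations_c13, fun m hm => ?_⟩
  have hdiag := IsMomentMap.eq_diagL_c13 hm
  refine ⟨?_, hdiag⟩
  rw [hdiag, smul_one_add_smul_diagL]
  congr 1
  funext i
  fin_cases i <;> norm_num
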